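/- For every integer n ≥ 2, every d ≥ 1, every 1 ≤ s ≤ d, every α > 1, all positive weights γ with γ_∅ = 1, and every (z_1,…,z_s) ∈ U_n^s, one has the lower bound T_{n,d,s,α,γ}(z_1,…,z_s) ≥ 2ζ(α) γ_{{s}} / n^α, where γ_{{s}} is the weight of the singleton set {s}. -/

import Mathlib

open Finset

noncomputable section

/-- `zetaR x = Σ_{h ≥ 1} h^{-x}`, the Riemann zeta function on reals. -/
def zetaR (x : ℝ) : ℝ := ∑' n : ℕ+, (n : ℝ) ^ (-x)

/-- `Un n = {z ∈ ℤ : 1 ≤ z ≤ n-1, gcd(z,n) = 1}`. -/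
def Un (n : ℕ) : Finset ℕ := (Finset.range n).filter fun z => 1 ≤ z ∧ Nat.gcd z n = 1

/-- The support of an integer vector. -/
def supp {k : ℕ} (h : Fin k → ℤ) : Finset (Fin k) := Finset.univ.filter fun j => h j ≠ 0

/-- `r'(h) = ∏_{j ∈ supp h} |h_j|^α`. -/
def rp {k : ℕ} (α : ℝ) (h : Fin k → ℤ) : ℝ := ∏ j ∈ supp h, |(h j : ℝ)| ^ α

/-- `r_{d,α,γ}(h) = (1/γ_{supp h}) ∏_{j ∈ supp h} |h_j|^α`. -/
def rK {k : ℕ} (α : ℝ) (γ : Finset (Fin k) → ℝ) (h : Fin k → ℤ) : ℝ := rp α h / γ (supp h)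

/-- `ℓ · z ≡ 0 (mod n)`. -/
def dotMod (n : ℕ) {k : ℕ} (ℓ : Fin k → ℤ) (z : Fin k → ℕ) : Prop :=
  (n : ℤ) ∣ ∑ j, ℓ j * (z j : ℤ)

/-- The search criterion `S_{n,d,α,γ}(z)`. -/
def Sq (n : ℕ) {k : ℕ} (α : ℝ) (γ : Finset (Fin k) → ℝ) (z : Fin k → ℕ) : ℝ :=
  ∑' h : Fin k → ℤ, (1 / rK α γ h) *
    ∑' ℓ : {ℓ : Fin k → ℤ // ℓ ≠ 0 ∧ dotMod n ℓ z}, 1 / rK α γ (h + ℓ.1)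

/-- `θ_{n,s+1,α}(z; β)`. -/
def theta (n : ℕ) (α : ℝ) {s : ℕ} (z : Fin (s+1) → ℕ) (β : Finset (Fin (s+1)) → ℝ) : ℝ :=
  ∑' h : Fin (s+1) → ℤ,
    ∑' ℓ : {ℓ : Fin (s+1) → ℤ // ℓ (Fin.last s) ≠ 0 ∧ dotMod n ℓ z},
      (β (supp h) / rp α h) * (β (supp (h + ℓ.1)) / rp α (h + ℓ.1))

/-- `T_{n,d,s+1,α,γ}(z_1,…,z_{s+1})`. -/
def Tcrit (n : ℕ) {d : ℕ} (α : ℝ) (γ : Finset (Fin d) → ℝ) (s : ℕ) (hs : s + 1 ≤ d)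
    (z : Fin (s+1) → ℕ) : ℝ :=
  ∑ w ∈ (Finset.univ.filter fun j : Fin d => s + 1 ≤ (j : ℕ)).powerset,
    (2 * zetaR (2*α)) ^ w.card *
      theta n α z (fun u => γ (u.map ⟨Fin.castLE hs, Fin.castLE_injective hs⟩ ∪ w))

/-- `z` is obtained by the component-by-component construction. -/
def IsCBC (n : ℕ) {d : ℕ} (α : ℝ) (γ : Finset (Fin d) → ℝ) (z : Fin d → ℕ) : Prop :=
  (∀ j, z j ∈ Un n) ∧
  ∀ (s : ℕ) (hs : s + 1 ≤ d), ∀ w ∈ Un n,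
    Tcrit n α γ s hs (fun j => z (Fin.castLE hs j)) ≤
      Tcrit n α γ s hs (Fin.snoc (fun j : Fin s => z (Fin.castLE (Nat.le_of_succ_le hs) j)) w)

/-- bound (6.6): the lower bound
`T_{n,d,s,α,γ}(z₁,…,z_s) ≥ 2ζ(α) γ_{{s}} / n^α`. -/
-- auxiliary lemmas

private lemma rp_nonneg {k : ℕ} (α : ℝ) (h : Fin k → ℤ) : 0 ≤ rp α h :=
  Finset.prod_nonneg fun _ _ => Real.rpow_nonneg (abs_nonneg _) _

private lemma theta_nonneg (n : ℕ) (α : ℝ) {s : ℕ} (z : Fin (s+1) → ℕ)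
    (β : Finset (Fin (s+1)) → ℝ) (hβ : ∀ u, 0 ≤ β u) : 0 ≤ theta n α z β :=
  tsum_nonneg fun _ => tsum_nonneg fun _ =>
    mul_nonneg (div_nonneg (hβ _) (rp_nonneg _ _)) (div_nonneg (hβ _) (rp_nonneg _ _))

private lemma zetaR_nonneg (x : ℝ) : 0 ≤ zetaR x :=
  tsum_nonneg fun _ => Real.rpow_nonneg (by positivity) _

private def Wf (α : ℝ) (t : ℤ) : ℝ := if t = 0 then 1 else |(t : ℝ)| ^ (-α)

private lemma Wf_nonneg (α : ℝ) (t : ℤ) : 0 ≤ Wf α t := by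
  unfold Wf; split
  · norm_num
  · exact Real.rpow_nonneg (abs_nonneg _) _

private lemma summable_Wf {α : ℝ} (hα : 1 < α) : Summable (Wf α) := by
  have h1 : Summable fun t : ℤ => |(t : ℝ)| ^ (-α) := Real.summable_abs_int_rpow hα
  have h2 : Summable fun t : ℤ => (if t = 0 then (1:ℝ) else 0) := by
    apply summable_of_ne_finset_zero (s := {(0:ℤ)})
    intro t ht
    simp only [Finset.mem_singleton] at ht
    simp [ht]
  refine (h1.add h2).congr fun t => ?_
  by_cases h : t = 0
  · subst h
    simp [Wf, Real.zero_rpow (neg_ne_zero.2 (ne_of_gt (by linarith : (0:ℝ) < α)))]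
  · simp [Wf, h]

private lemma inv_rp_eq {k : ℕ} (α : ℝ) (h : Fin k → ℤ) : (rp α h)⁻¹ = ∏ j, Wf α (h j) := by
  rw [rp, ← Finset.prod_inv_distrib, supp, Finset.prod_filter]
  refine Finset.prod_congr rfl fun j _ => ?_
  by_cases hj : h j = 0
  · simp [hj, Wf]
  · rw [if_pos hj, Wf, if_neg hj, Real.rpow_neg (abs_nonneg _)]

private lemma summable_pi_prod {W : ℤ → ℝ} (hW : Summable W) (hW0 : ∀ t, 0 ≤ W t)
    (k : ℕ) : Summable fun h : Fin k → ℤ => ∏ j, W (h j) := by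
  induction k with
  | zero => exact Summable.of_finite
  | succ k ih =>
      have hmul : Summable fun p : ℤ × (Fin k → ℤ) => W p.1 * ∏ j, W (p.2 j) :=
        Summable.mul_of_nonneg (f := W) (g := fun h : Fin k → ℤ => ∏ j, W (h j)) hW ih
          (fun t => hW0 t) (fun h => Finset.prod_nonneg fun j _ => hW0 _)
      rw [← (Fin.consEquiv (fun _ : Fin (k+1) => ℤ)).summable_iff]
      refine hmul.congr fun p => ?_
      simp only [Function.comp_apply, Fin.consEquiv_apply]
      rw [Fin.prod_univ_succ]
      simp


-- numeric lemmas

private lemma tsum_int_abs_rpow {α : ℝ} (hα : 1 < α) :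
    ∑' t : ℤ, |(t : ℝ)| ^ (-α) = 2 * zetaR α := by
  set q : ℤ → ℝ := fun t => |(t : ℝ)| ^ (-α) with hq
  have hα0 : -α ≠ 0 := neg_ne_zero.2 (ne_of_gt (by linarith))
  have hnat : Summable fun m : ℕ => (m : ℝ) ^ (-α) :=
    Real.summable_nat_rpow.2 (by linarith)
  have h1 : Summable fun m : ℕ => q m := by
    refine hnat.congr fun m => ?_
    simp [hq, Nat.abs_cast]
  have h2 : Summable fun m : ℕ => q (-(m + 1)) := by
    have h3 : Summable fun m : ℕ => ((m : ℝ) + 1) ^ (-α) := by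
      have h4 := (summable_nat_add_iff 1).2 hnat
      exact h4.congr fun m => by push_cast; ring_nf
    refine h3.congr fun m => ?_
    rw [hq]
    push_cast
    rw [abs_neg, abs_of_nonneg (by positivity)]
  have key1 : (∑' m : ℕ, q m) = zetaR α := by
    rw [zetaR]
    rw [← Function.Injective.tsum_eq (g := ((↑) : ℕ+ → ℕ))
      (f := fun m : ℕ => q m) PNat.coe_injective ?_]
    · exact tsum_congr fun m => by simp [hq, Nat.abs_cast]
    · intro m hm
      rcases Nat.eq_zero_or_pos m with rfl | hpos
      · exfalso
        apply hm
        rw [hq]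
        simp [Real.zero_rpow hα0]
      · exact ⟨⟨m, hpos⟩, rfl⟩
  have key2 : (∑' m : ℕ, q (-(m + 1))) = zetaR α := by
    have e1 : (∑' m : ℕ, ((m : ℝ)) ^ (-α)) = zetaR α := by
      rw [← key1]
      exact tsum_congr fun m => by simp [hq, Nat.abs_cast]
    rw [Summable.tsum_eq_zero_add hnat] at e1
    rw [Nat.cast_zero, Real.zero_rpow hα0, zero_add] at e1
    rw [← e1]
    exact tsum_congr fun m => by
      rw [hq]
      push_cast
      rw [abs_neg, abs_of_nonneg (by positivity)]
  rw [show (∑' t : ℤ, |(t : ℝ)| ^ (-α)) = ∑' t : ℤ, q t from rfl,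
    tsum_of_nat_of_neg_add_one h1 h2, key1, key2]
  ring

private lemma tsum_ne_zero_abs_rpow {α : ℝ} (hα : 1 < α) :
    ∑' t : {t : ℤ // t ≠ 0}, |((t.1 : ℤ) : ℝ)| ^ (-α) = 2 * zetaR α := by
  have hα0 : -α ≠ 0 := neg_ne_zero.2 (ne_of_gt (by linarith))
  rw [← tsum_int_abs_rpow hα]
  exact tsum_subtype_eq_of_support_subset (f := fun t : ℤ => |(t : ℝ)| ^ (-α))
    (s := {t : ℤ | t ≠ 0}) (fun t ht => by
      simp only [Function.mem_support] at ht
      intro h0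
      apply ht
      rw [h0]
      simp [Real.zero_rpow hα0])

private lemma supp_zero {k : ℕ} : supp (0 : Fin k → ℤ) = ∅ := by simp [supp]

private lemma rp_zero {k : ℕ} (α : ℝ) : rp α (0 : Fin k → ℤ) = 1 := by
  rw [rp, supp_zero, Finset.prod_empty]

private lemma rp_pos {k : ℕ} (α : ℝ) (h : Fin k → ℤ) : 0 < rp α h := by
  refine Finset.prod_pos fun j hj => Real.rpow_pos_of_pos ?_ _
  simp only [supp, Finset.mem_filter] at hj
  exact abs_pos.2 (Int.cast_ne_zero.2 hj.2)

private lemma theta_lower (n : ℕ) (hn : 0 < n) {α : ℝ} (hα : 1 < α) {s : ℕ}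
    (z : Fin (s+1) → ℕ) (β : Finset (Fin (s+1)) → ℝ)
    (hβ : ∀ u, 0 < β u) (hβ0 : β ∅ = 1) :
    2 * zetaR α * β {Fin.last s} / (n : ℝ) ^ α ≤ theta n α z β := by
  classical
  set F : (Fin (s+1) → ℤ) → ℝ := fun m => β (supp m) / rp α m with hF
  have hF0 : ∀ m, 0 ≤ F m := fun m => div_nonneg (hβ _).le (rp_nonneg _ _)
  -- summability of F
  have hSF : Summable F := by
    set B : ℝ := ∑ u : Finset (Fin (s+1)), β u with hB
    have hβB : ∀ u, β u ≤ B :=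
      fun u => Finset.single_le_sum (f := β) (fun v _ => (hβ v).le) (Finset.mem_univ u)
    have hP := summable_pi_prod (summable_Wf hα) (Wf_nonneg α) (s+1)
    refine Summable.of_nonneg_of_le hF0 (fun m => ?_) (hP.mul_left B)
    rw [hF]
    simp only []
    rw [div_eq_mul_inv, inv_rp_eq]
    exact mul_le_mul_of_nonneg_right (hβB _)
      (Finset.prod_nonneg fun j _ => Wf_nonneg α _)
  -- inner sums
  have hinj : ∀ h : Fin (s+1) → ℤ,
      Function.Injective fun ℓ : {ℓ : Fin (s+1) → ℤ // ℓ (Fin.last s) ≠ 0 ∧ dotMod n ℓ z} =>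
        h + ℓ.1 := by
    intro h a b hab
    exact Subtype.ext (by simpa using hab)
  have hinner : ∀ h : Fin (s+1) → ℤ,
      Summable fun ℓ : {ℓ : Fin (s+1) → ℤ // ℓ (Fin.last s) ≠ 0 ∧ dotMod n ℓ z} =>
        F (h + ℓ.1) :=
    fun h => hSF.comp_injective (hinj h)
  set C := ∑' m, F m with hC
  have hinner_le : ∀ h : Fin (s+1) → ℤ,
      (∑' ℓ : {ℓ : Fin (s+1) → ℤ // ℓ (Fin.last s) ≠ 0 ∧ dotMod n ℓ z}, F (h + ℓ.1)) ≤ C := by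
    intro h
    exact Summable.tsum_le_tsum_of_inj _ (hinj h) (fun m _ => hF0 m) (fun ℓ => le_rfl) (hinner h) hSF
  -- rewrite theta
  have htheta : theta n α z β =
      ∑' h : Fin (s+1) → ℤ,
        F h * ∑' ℓ : {ℓ : Fin (s+1) → ℤ // ℓ (Fin.last s) ≠ 0 ∧ dotMod n ℓ z}, F (h + ℓ.1) := by
    rw [theta]
    exact tsum_congr fun h => tsum_mul_left
  -- summability of the outer function
  have hg : Summable fun h : Fin (s+1) → ℤ =>
      F h * ∑' ℓ : {ℓ : Fin (s+1) → ℤ // ℓ (Fin.last s) ≠ 0 ∧ dotMod n ℓ z}, F (h + ℓ.1) := by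
    refine Summable.of_nonneg_of_le
      (fun h => mul_nonneg (hF0 h) (tsum_nonneg fun ℓ => hF0 _))
      (fun h => mul_le_mul_of_nonneg_left (hinner_le h) (hF0 h)) (hSF.mul_right C)
  -- extract the h = 0 term
  have hmain : F 0 * (∑' ℓ : {ℓ : Fin (s+1) → ℤ // ℓ (Fin.last s) ≠ 0 ∧ dotMod n ℓ z},
      F ((0 : Fin (s+1) → ℤ) + ℓ.1)) ≤ theta n α z β := by
    rw [htheta]
    exact Summable.le_tsum hg 0 fun h _ => mul_nonneg (hF0 h) (tsum_nonneg fun ℓ => hF0 _)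
  have hF0val : F 0 = 1 := by
    rw [hF]
    simp only []
    rw [rp_zero, supp_zero, hβ0, div_one]
  rw [hF0val, one_mul] at hmain
  refine le_trans ?_ hmain
  -- lower-bound the ℓ-sum via the injection t ↦ n·t·e_last
  have hnz : ((n : ℤ)) ≠ 0 := Int.natCast_ne_zero.2 hn.ne'
  have hsupp_single : ∀ v : ℤ, v ≠ 0 →
      supp (Pi.single (Fin.last s) v) = {Fin.last s} := by
    intro v hv
    ext j
    simp only [supp, Finset.mem_filter, Finset.mem_univ, true_and, Finset.mem_singleton]
    constructor
    · intro hj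
      by_contra hne
      exact hj (Pi.single_eq_of_ne hne _)
    · intro hj
      subst hj
      rw [Pi.single_eq_same]
      exact hv
  set e : {t : ℤ // t ≠ 0} → {ℓ : Fin (s+1) → ℤ // ℓ (Fin.last s) ≠ 0 ∧ dotMod n ℓ z} :=
    fun t => ⟨Pi.single (Fin.last s) ((n : ℤ) * t.1), by
      constructor
      · rw [Pi.single_eq_same]
        exact mul_ne_zero hnz t.2
      · rw [dotMod]
        have hsum : (∑ j, (Pi.single (Fin.last s) ((n : ℤ) * t.1) : Fin (s+1) → ℤ) j * (z j : ℤ)) =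
            (n : ℤ) * t.1 * (z (Fin.last s) : ℤ) := by
          rw [Finset.sum_eq_single_of_mem (Fin.last s) (Finset.mem_univ _)]
          · rw [Pi.single_eq_same]
          · intro j _ hj
            rw [Pi.single_eq_of_ne hj, zero_mul]
        rw [hsum]
        exact ⟨t.1 * (z (Fin.last s) : ℤ), by ring⟩⟩ with he
  have he_inj : Function.Injective e := by
    intro a b hab
    have h1 := congrArg (fun ℓ => ℓ.1 (Fin.last s)) hab
    simp only [he, Pi.single_eq_same] at h1
    exact Subtype.ext (mul_left_cancel₀ hnz h1)
  have hFe : ∀ t : {t : ℤ // t ≠ 0},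
      F ((0 : Fin (s+1) → ℤ) + (e t).1) =
        β {Fin.last s} / (n : ℝ) ^ α * |((t.1 : ℤ) : ℝ)| ^ (-α) := by
    intro t
    have hv : ((n : ℤ) * t.1) ≠ 0 := mul_ne_zero hnz t.2
    have h1 : rp α (Pi.single (Fin.last s) ((n : ℤ) * t.1)) =
        (n : ℝ) ^ α * |((t.1 : ℤ) : ℝ)| ^ α := by
      rw [rp, hsupp_single _ hv, Finset.prod_singleton, Pi.single_eq_same]
      push_cast
      rw [abs_mul, abs_of_nonneg (by positivity : (0:ℝ) ≤ (n : ℝ)),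
        Real.mul_rpow (by positivity) (abs_nonneg _)]
    rw [zero_add, hF]
    simp only [he]
    rw [h1, hsupp_single _ hv, Real.rpow_neg (abs_nonneg _), ← div_div, div_eq_mul_inv]
  have hc_sum : Summable fun t : {t : ℤ // t ≠ 0} =>
      β {Fin.last s} / (n : ℝ) ^ α * |((t.1 : ℤ) : ℝ)| ^ (-α) :=
    ((Real.summable_abs_int_rpow hα).comp_injective Subtype.val_injective).mul_left _
  have hle : (∑' t : {t : ℤ // t ≠ 0},
      β {Fin.last s} / (n : ℝ) ^ α * |((t.1 : ℤ) : ℝ)| ^ (-α)) ≤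
      ∑' ℓ : {ℓ : Fin (s+1) → ℤ // ℓ (Fin.last s) ≠ 0 ∧ dotMod n ℓ z},
        F ((0 : Fin (s+1) → ℤ) + ℓ.1) := by
    refine Summable.tsum_le_tsum_of_inj e he_inj (fun ℓ _ => hF0 _)
      (fun t => le_of_eq (hFe t).symm) hc_sum (hinner 0)
  refine le_trans (le_of_eq ?_) hle
  rw [tsum_mul_left, tsum_ne_zero_abs_rpow hα]
  ring
/-- helper end -/

theorem stmt16 (n d : ℕ) (hn : 2 ≤ n) (α : ℝ) (hα : 1 < α)
    (γ : Finset (Fin d) → ℝ) (hγpos : ∀ u, 0 < γ u) (hγ0 : γ ∅ = 1)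
    (s : ℕ) (hs : s + 1 ≤ d) (z : Fin (s+1) → ℕ) (hz : ∀ j, z j ∈ Un n) :
    2 * zetaR α * γ {Fin.castLE hs (Fin.last s)} / (n : ℝ) ^ α ≤ Tcrit n α γ s hs z := by
  classical
  have hterm : ∀ w ∈ (Finset.univ.filter fun j : Fin d => s + 1 ≤ (j : ℕ)).powerset,
      0 ≤ (2 * zetaR (2*α)) ^ w.card *
        theta n α z (fun u => γ (u.map ⟨Fin.castLE hs, Fin.castLE_injective hs⟩ ∪ w)) :=
    fun w _ => mul_nonneg (pow_nonneg (mul_nonneg (by norm_num) (zetaR_nonneg _)) _)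
      (theta_nonneg _ _ _ _ fun u => (hγpos _).le)
  have h1 : (2 * zetaR (2*α)) ^ (∅ : Finset (Fin d)).card *
      theta n α z (fun u => γ (u.map ⟨Fin.castLE hs, Fin.castLE_injective hs⟩ ∪ ∅)) ≤
      Tcrit n α γ s hs z := by
    rw [Tcrit]
    exact Finset.single_le_sum hterm (Finset.empty_mem_powerset _)
  rw [Finset.card_empty, pow_zero, one_mul] at h1
  refine le_trans ?_ h1
  have h2 := theta_lower n (by omega) hα z
    (fun u => γ (u.map ⟨Fin.castLE hs, Fin.castLE_injective hs⟩ ∪ ∅))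
    (fun u => hγpos _) (by simp [hγ0])
  have h3 : ({Fin.last s} : Finset (Fin (s+1))).map
      ⟨Fin.castLE hs, Fin.castLE_injective hs⟩ ∪ ∅ = {Fin.castLE hs (Fin.last s)} := by
    simp
  simpa only [h3] using h2

end
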